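/- arXiv:1603.08585 — 3 statements merged into one kernel-verified Lean document; each statement's English description precedes it below -/
import Mathlib

section
/- If M is a k-disjunct binary t×n matrix and x is a binary vector with at most k nonzero entries, then the naive decoding algorithm (which outputs all indices i such that every test/row containing i has a positive outcome, i.e., (Mx)_row ≠ 0 under Boolean OR semantics) outputs exactly the support of x. -/
/-- If `M` is a `k`-disjunct binary matrix and `x` is a binary vector with at most `k`
nonzero entries, the naive decoding algorithm (output all indices participating only in
positive tests) outputs exactly the support of `x`. -/
theorem naive_decoding_disjunct (t n k : ℕ) (M : Fin t → Fin n → Bool)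
    (hdisj : ∀ S : Finset (Fin n), S.card ≤ k → ∀ j ∉ S,
      ∃ i : Fin t, M i j = true ∧ ∀ l ∈ S, M i l = false)
    (x : Fin n → Bool)
    (hx : (Finset.univ.filter (fun j => x j = true)).card ≤ k) :
    Finset.univ.filter
        (fun j => ∀ i : Fin t, M i j = true → ∃ j', x j' = true ∧ M i j' = true)
      = Finset.univ.filter (fun j => x j = true) := by
  ext j
  simp only [Finset.mem_filter, Finset.mem_univ, true_and]
  constructor
  · intro h
    by_contra hxj
    have hjnot : j ∉ Finset.univ.filter (fun j => x j = true) := by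
      simp [hxj]
    obtain ⟨i, hij, hrow⟩ := hdisj _ hx j hjnot
    obtain ⟨j', hxj', hij'⟩ := h i hij
    have := hrow j' (by simp [hxj'])
    simp [this] at hij'
  · intro h i hij
    exact ⟨j, h, hij⟩
end

section
/- Let A be a binary t×n matrix, V a k×n Vandermonde matrix with distinct generating points, and A'' = A ⊗ V their row-wise tensor product (the row of A'' indexed by (i,i') is the coordinate-wise product of row i of A and row i' of V). Then for any x ∈ ℝⁿ with at most k nonzero entries and any row i of A: all k entries of ((e_i^T A) ⊗ V)x are zero if and only if supp(e_i^T A) ∩ supp(x) = ∅. -/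
open Classical in
/-- For the row-wise tensor product of a binary matrix `A` with a `k×n` Vandermonde
matrix `V`, and any `k`-sparse `x`: all `k` entries of `((eᵢᵀA) ⊗ V)x` vanish iff
`supp(eᵢᵀA) ∩ supp(x) = ∅`. -/
theorem tensor_row_test (t n k : ℕ) (A : Fin t → Fin n → Bool)
    (α : Fin n → ℝ) (hα : Function.Injective α) (x : Fin n → ℝ)
    (hsparse : (Finset.univ.filter (fun j => x j ≠ 0)).card ≤ k) (i : Fin t) :
    (∀ i' : Fin k, ∑ j, (if A i j = true then (1 : ℝ) else 0) * α j ^ (i' : ℕ) * x j = 0)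
      ↔ ∀ j, A i j = true → x j = 0 := by
  constructor
  · intro hsum j hA
    by_contra hx
    set S : Finset (Fin n) :=
      Finset.univ.filter (fun j => A i j = true ∧ x j ≠ 0) with hS
    have hjS : j ∈ S := by simp [hS, hA, hx]
    have hScard : S.card ≤ k := by
      refine le_trans (Finset.card_le_card ?_) hsparse
      intro j' hj'
      simp only [hS, Finset.mem_filter, Finset.mem_univ, true_and] at hj' ⊢
      exact hj'.2
    -- moment conditions restricted to S
    have hmom : ∀ m : ℕ, m < k → ∑ j' ∈ S, x j' * α j' ^ m = 0 := by
      intro m hm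
      have h1 := hsum ⟨m, hm⟩
      have h2 : ∑ j' ∈ S, (if A i j' = true then (1 : ℝ) else 0) * α j' ^ m * x j'
          = ∑ j' : Fin n, (if A i j' = true then (1 : ℝ) else 0) * α j' ^ m * x j' := by
        apply Finset.sum_subset (Finset.subset_univ S)
        intro j' _ hj'
        simp only [hS, Finset.mem_filter, Finset.mem_univ, true_and, not_and_or,
          not_not] at hj'
        rcases hj' with h | h
        · simp [h]
        · simp [h]
      have h3 : ∑ j' ∈ S, x j' * α j' ^ m
          = ∑ j' ∈ S, (if A i j' = true then (1 : ℝ) else 0) * α j' ^ m * x j' := by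
        apply Finset.sum_congr rfl
        intro j' hj'
        simp only [hS, Finset.mem_filter, Finset.mem_univ, true_and] at hj'
        rw [if_pos hj'.1]; ring
      rw [h3, h2, h1]
    -- the test polynomial
    set q : Polynomial ℝ := ∏ j' ∈ S.erase j, (Polynomial.X - Polynomial.C (α j')) with hq
    have hdeg : q.natDegree < k := by
      have h1 : q.natDegree = (S.erase j).card := by
        rw [hq, Polynomial.natDegree_prod_of_monic _ _
          (fun _ _ => Polynomial.monic_X_sub_C _)]
        simp [Polynomial.natDegree_X_sub_C]
      rw [h1, Finset.card_erase_of_mem hjS]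
      exact lt_of_lt_of_le (Nat.sub_lt (Finset.card_pos.mpr ⟨j, hjS⟩) one_pos) hScard
    have hsum0 : ∑ j' ∈ S, x j' * q.eval (α j') = 0 := by
      have hterm : ∀ j' ∈ S, x j' * q.eval (α j')
          = ∑ m ∈ Finset.range k, q.coeff m * (x j' * α j' ^ m) := by
        intro j' _
        rw [Polynomial.eval_eq_sum_range' hdeg, Finset.mul_sum]
        exact Finset.sum_congr rfl (fun m _ => by ring)
      rw [Finset.sum_congr rfl hterm, Finset.sum_comm]
      apply Finset.sum_eq_zero
      intro m hm
      rw [← Finset.mul_sum, hmom m (Finset.mem_range.mp hm), mul_zero]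
    have hsingle : ∑ j' ∈ S, x j' * q.eval (α j') = x j * q.eval (α j) := by
      rw [← Finset.add_sum_erase _ _ hjS]
      have h0 : ∀ j' ∈ S.erase j, x j' * q.eval (α j') = 0 := by
        intro j' hj'
        have : q.eval (α j') = 0 := by
          rw [hq, Polynomial.eval_prod]
          apply Finset.prod_eq_zero hj'
          simp
        rw [this, mul_zero]
      rw [Finset.sum_eq_zero h0, add_zero]
    have heval : q.eval (α j) ≠ 0 := by
      rw [hq, Polynomial.eval_prod]
      apply Finset.prod_ne_zero_iff.mpr
      intro j' hj'
      simp only [Polynomial.eval_sub, Polynomial.eval_X, Polynomial.eval_C, sub_ne_zero]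
      intro h
      exact (Finset.ne_of_mem_erase hj') (hα h).symm
    have : x j * q.eval (α j) = 0 := by rw [← hsingle, hsum0]
    rcases mul_eq_zero.mp this with h | h
    · exact hx h
    · exact heval h
  · intro h i'
    apply Finset.sum_eq_zero
    intro j _
    by_cases hA : A i j = true
    · simp [hA, h j hA]
    · simp [hA]
end

section
/- Let A be a k-disjunct t×n binary matrix and V a k×n Vandermonde matrix with distinct columns. Then given the vector of booleans b_{(i,i')} = [((A ⊗ V)x)_{(i,i')} ≠ 0] for a k-sparse x ∈ ℝⁿ, the modified naive decoding algorithm (which declares test i of A positive iff some entry of ((e_i^T A) ⊗ V)x is nonzero) exactly recovers supp(x). -/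
open Classical in
lemma vand_key {n k : ℕ} (α : Fin n → ℝ) (hα : Function.Injective α) (x : Fin n → ℝ)
    (S : Finset (Fin n)) (hS : S.card ≤ k)
    (h : ∀ i' : Fin k, ∑ j ∈ S, α j ^ (i' : ℕ) * x j = 0) :
    ∀ j ∈ S, x j = 0 := by
  set s := S.card with hs
  let e := S.orderIsoOfFin rfl
  let M : Matrix (Fin s) (Fin s) ℝ := Matrix.transpose (Matrix.vandermonde (fun j => α (e j)))
  have hdet : M.det ≠ 0 := by
    rw [Matrix.det_transpose, Matrix.det_vandermonde_ne_zero_iff]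
    intro a b hab
    exact e.injective (Subtype.ext (hα hab))
  have hv : M.mulVec (fun j => x (e j)) = 0 := by
    funext i
    have key := h ⟨i, lt_of_lt_of_le i.2 hS⟩
    have hsum : ∑ j ∈ S, α j ^ (i : ℕ) * x j
        = ∑ j : Fin s, α (e j) ^ (i : ℕ) * x (e j) := by
      rw [← Finset.sum_attach S (fun j => α j ^ (i : ℕ) * x j)]
      exact (Equiv.sum_comp e.toEquiv (fun j => α (j : Fin n) ^ (i : ℕ) * x (j : Fin n))).symm
    simp only [Matrix.mulVec, dotProduct, Pi.zero_apply, M, Matrix.transpose_apply,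
      Matrix.vandermonde_apply]
    rw [← hsum]
    exact key
  have hz := Matrix.eq_zero_of_mulVec_eq_zero hdet hv
  intro j hj
  have := congrFun hz (e.symm ⟨j, hj⟩)
  simpa using this

open Classical in
/-- If `A` is `k`-disjunct and `V` is a `k×n` Vandermonde matrix with distinct generating
points, then the modified naive decoding algorithm, which declares test `i` of `A`
positive iff some entry of `((eᵢᵀA) ⊗ V)x` is nonzero, exactly recovers `supp(x)` for any
`k`-sparse real vector `x`. -/
theorem modified_decoding_recovers_support (t n k : ℕ) (A : Fin t → Fin n → Bool)
    (hdisj : ∀ S : Finset (Fin n), S.card ≤ k → ∀ j ∉ S,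
      ∃ i : Fin t, A i j = true ∧ ∀ l ∈ S, A i l = false)
    (α : Fin n → ℝ) (hα : Function.Injective α) (x : Fin n → ℝ)
    (hsparse : (Finset.univ.filter (fun j => x j ≠ 0)).card ≤ k) :
    Finset.univ.filter
        (fun j => ∀ i : Fin t, A i j = true →
          ∃ i' : Fin k, ∑ j', (if A i j' = true then (1 : ℝ) else 0) * α j' ^ (i' : ℕ) * x j' ≠ 0)
      = Finset.univ.filter (fun j => x j ≠ 0) := by
  ext j
  simp only [Finset.mem_filter, Finset.mem_univ, true_and]
  constructor
  · intro hj
    intro hx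
    obtain ⟨i, hij, hrow⟩ := hdisj (Finset.univ.filter (fun j => x j ≠ 0)) hsparse j
      (by simp [hx])
    obtain ⟨i', hi'⟩ := hj i hij
    apply hi'
    apply Finset.sum_eq_zero
    intro j' _
    by_cases hA : A i j' = true
    · have : x j' = 0 := by
        by_contra hxj
        have := hrow j' (by simp [hxj])
        simp [this] at hA
      simp [this]
    · simp [hA]
  · intro hx i hij
    by_contra hall
    push_neg at hall
    set S := Finset.univ.filter (fun j' => A i j' = true ∧ x j' ≠ 0) with hS
    have hcard : S.card ≤ k := le_trans (Finset.card_le_card (by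
      intro a ha
      simp only [hS, Finset.mem_filter, Finset.mem_univ, true_and] at ha ⊢
      exact ha.2)) hsparse
    have hsums : ∀ i' : Fin k, ∑ j' ∈ S, α j' ^ (i' : ℕ) * x j' = 0 := by
      intro i'
      have := hall i'
      rw [← this]
      rw [Finset.sum_filter]
      apply Finset.sum_congr rfl
      intro j' _
      by_cases hA : A i j' = true
      · by_cases hxj : x j' = 0 <;> simp [hA, hxj]
      · simp [hA]
    have := vand_key α hα x S hcard hsums j (by simp [hS, hij, hx])
    exact hx this
end
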